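/- Let d ≥ 2 and let ζ ∈ ℂ be a primitive d-th root of unity. In the group algebra ℂ[(ℤ/dℤ) × (ℤ/dℤ)], for all integers l, p: (1/d²) · ∑_{j=0}^{d−1} ∑_{j'=0}^{d−1} ∑_{k=0}^{d−1} ∑_{k'=0}^{d−1} ζ^{−k·j − k'·j' − (2p+l−1)·k' + (p+l−1)·(k'+j)} · e_{(−k−1,\; j'+k+1)} = e_{(−l−p,\; l)}, where e_{(a,b)} denotes the standard basis element of the group algebra at the element (a mod d, b mod d) of (ℤ/dℤ) × (ℤ/dℤ). -/

import Mathlib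

/-!
Writing the exponent as `(-p - j') k' + (p + l - 1 - k) j`, the sums over `k'` and over `j` are
character sums over `ℤ/dℤ`: by orthogonality each equals `d` times the indicator of a single
congruence class, `j' ≡ -p` and `k ≡ p + l - 1`. The two factors `d` cancel the `1/d²`, and the
surviving basis element is `e_{(-(p+l-1)-1, -p + (p+l-1) + 1)} = e_{(-l-p, l)}`.
-/

theorem Finset.sum_range_ite_natCast_eq {M : Type*} [AddCommMonoid M] {d : ℕ} [NeZero d]
    (c : ZMod d) (f : ℕ → M) :
    ∑ k ∈ Finset.range d, (if (k : ZMod d) = c then f k else 0) = f c.val := by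
  have hiff : ∀ k ∈ Finset.range d, (k : ZMod d) = c ↔ c.val = k := fun k hk => by
    rw [← (ZMod.val_injective d).eq_iff, ZMod.val_cast_of_lt (Finset.mem_range.1 hk), eq_comm]
  rw [Finset.sum_congr rfl fun k hk => if_congr (hiff k hk) rfl rfl, Finset.sum_ite_eq,
    if_pos (Finset.mem_range.2 c.val_lt)]

theorem Finset.sum_sum_sum_sum_smul_smul {ι R M : Type*} [Monoid R] [AddCommMonoid M]
    [DistribMulAction R M] (s : Finset ι) (A B : ι → ι → R) (f : ι → ι → M) :
    ∑ j ∈ s, ∑ j' ∈ s, ∑ k ∈ s, ∑ k' ∈ s, A j' k' • B k j • f k j' =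
      ∑ j' ∈ s, ∑ k' ∈ s, A j' k' • ∑ k ∈ s, ∑ j ∈ s, B k j • f k j' := by
  simp_rw [Finset.smul_sum]
  rw [Finset.sum_comm]
  refine Finset.sum_congr rfl fun j' _ => ?_
  rw [Finset.sum_comm, Finset.sum_comm_cycle]

namespace IsPrimitiveRoot

variable {K : Type*} [Field K] {d : ℕ} {ζ : K}

theorem sum_range_zpow_mul (hζ : IsPrimitiveRoot ζ d) (m : ℤ) :
    ∑ k ∈ Finset.range d, ζ ^ (m * k) = if (m : ZMod d) = 0 then (d : K) else 0 := by
  split_ifs with hm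
  · have hdvd : (d : ℤ) ∣ m := (ZMod.intCast_zmod_eq_zero_iff_dvd m d).1 hm
    simp [(hζ.zpow_eq_one_iff_dvd _).2 (hdvd.mul_right _)]
  · have hne : ζ ^ m ≠ 1 := fun h =>
      hm ((ZMod.intCast_zmod_eq_zero_iff_dvd m d).2 ((hζ.zpow_eq_one_iff_dvd m).1 h))
    have hroot : (ζ ^ m) ^ d = 1 := by
      rw [← zpow_natCast, ← zpow_mul, mul_comm, zpow_mul, zpow_natCast, hζ.pow_eq_one, one_zpow]
    simp_rw [zpow_mul, zpow_natCast]
    exact (mul_eq_zero.1 ((geom_sum_mul _ _).trans (sub_eq_zero.2 hroot))).resolve_right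
      (sub_ne_zero.2 hne)

theorem sum_range_sum_range_zpow_sub_mul_smul {M : Type*} [AddCommMonoid M] [Module K M]
    [NeZero d] (hζ : IsPrimitiveRoot ζ d) (a : ℤ) (f : ℕ → M) :
    ∑ k ∈ Finset.range d, ∑ j ∈ Finset.range d, ζ ^ ((a - k) * j) • f k =
      (d : K) • f (a : ZMod d).val := by
  have hcast : ∀ k : ℕ, ((a - k : ℤ) : ZMod d) = 0 ↔ (k : ZMod d) = a := fun k => by
    push_cast
    exact sub_eq_zero.trans eq_comm
  simp_rw [← Finset.sum_smul, hζ.sum_range_zpow_mul, ite_smul, zero_smul, hcast]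
  exact Finset.sum_range_ite_natCast_eq _ _

end IsPrimitiveRoot

theorem stmt12 (d : ℕ) (hd : 2 ≤ d) (ζ : ℂ) (hζ : IsPrimitiveRoot ζ d) (l p : ℤ) :
    (1 / (d : ℂ) ^ 2) •
      ∑ j ∈ Finset.range d, ∑ j' ∈ Finset.range d, ∑ k ∈ Finset.range d, ∑ k' ∈ Finset.range d,
        ζ ^ (-(k : ℤ) * (j : ℤ) - (k' : ℤ) * (j' : ℤ) - (2 * p + l - 1) * (k' : ℤ)
              + (p + l - 1) * ((k' : ℤ) + (j : ℤ))) •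
          (AddMonoidAlgebra.single (((-(k : ℤ) - 1 : ℤ) : ZMod d), (((j' : ℤ) + (k : ℤ) + 1 : ℤ) : ZMod d))
              (1 : ℂ) : AddMonoidAlgebra ℂ (ZMod d × ZMod d)) =
    (AddMonoidAlgebra.single (((-l - p : ℤ) : ZMod d), ((l : ℤ) : ZMod d)) (1 : ℂ)
      : AddMonoidAlgebra ℂ (ZMod d × ZMod d)) := by
  have : NeZero d := ⟨by omega⟩
  obtain ⟨e, he⟩ : ∃ e : ℕ → ℕ → AddMonoidAlgebra ℂ (ZMod d × ZMod d), ∀ k j', e k j' =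
      AddMonoidAlgebra.single (((-(k : ℤ) - 1 : ℤ) : ZMod d), (((j' : ℤ) + (k : ℤ) + 1 : ℤ) : ZMod d)) 1 :=
    ⟨_, fun _ _ => rfl⟩
  have hsplit : ∀ j j' k k' : ℕ,
      ζ ^ (-(k : ℤ) * (j : ℤ) - (k' : ℤ) * (j' : ℤ) - (2 * p + l - 1) * (k' : ℤ)
        + (p + l - 1) * ((k' : ℤ) + (j : ℤ))) • e k j' =
      ζ ^ ((-p - j') * k') • ζ ^ ((p + l - 1 - k) * j) • e k j' := fun j j' k k' => by
    rw [smul_smul, ← zpow_add₀ (hζ.ne_zero (by omega))]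
    congr 2
    ring
  have he_val : ∀ a b : ZMod d, e a.val b.val = AddMonoidAlgebra.single (-a - 1, b + a + 1) 1 := by
    intro a b
    rw [he]
    push_cast [ZMod.natCast_zmod_val]
    rfl
  have hindex : e ((p + l - 1 : ℤ) : ZMod d).val ((-p : ℤ) : ZMod d).val =
      AddMonoidAlgebra.single (((-l - p : ℤ) : ZMod d), ((l : ℤ) : ZMod d)) 1 := by
    rw [he_val]
    congr 3 <;> push_cast <;> ring
  have hscalar : 1 / (d : ℂ) ^ 2 * d * d = 1 := by
    field_simp [NeZero.ne d]
  -- the last rewrite fires twice: on the `(k, j)` sums, then on the `(j', k')` sums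
  simp_rw [← he, hsplit, Finset.sum_sum_sum_sum_smul_smul,
    hζ.sum_range_sum_range_zpow_sub_mul_smul]
  rw [smul_smul, smul_smul, hscalar, one_smul, hindex]
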